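/- arXiv:2410.07007 — 2 statements merged into one kernel-verified Lean document; each statement's English description precedes it below -/
import Mathlib

section
/- With P_n(x) = det(M_n(x)) as above, for all n > 1: P_{2n−1}(x) = P_{n−1}(x)·(P_n(x) − x²·P_{n−2}(x)). -/
open Matrix Polynomial

noncomputable def Mmat (n : ℕ) (x : ℂ) : Matrix (Fin n) (Fin n) ℂ :=
  Matrix.of fun i j =>
    if (i : ℕ) = (j : ℕ) then 1
    else if (i : ℕ) + 1 = (j : ℕ) ∨ (j : ℕ) + 1 = (i : ℕ) then x else 0

noncomputable def P (n : ℕ) (x : ℂ) : ℂ := (Mmat n x).det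

lemma P_rec (n : ℕ) (x : ℂ) : P (n + 2) x = P (n + 1) x - x ^ 2 * P n x := by
  have h1 : (Mmat (n + 2) x).submatrix Fin.succ ((0 : Fin (n+2)).succAbove) = Mmat (n + 1) x := by
    ext i j
    simp [Mmat, Fin.succAbove, Fin.succ]
  have hB : ((Mmat (n + 2) x).submatrix Fin.succ ((Fin.succ 0 : Fin (n+2)).succAbove)).det
      = x * P n x := by
    have h2 : (((Mmat (n + 2) x).submatrix Fin.succ ((Fin.succ 0 : Fin (n+2)).succAbove)).submatrix
        ((0 : Fin (n+1)).succAbove) Fin.succ) = Mmat n x := by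
      ext i j
      simp [Mmat, Fin.succAbove, Fin.succ]
    rw [det_succ_column_zero, Fin.sum_univ_succ, h2]
    have e0 : (Mmat (n + 2) x).submatrix Fin.succ ((Fin.succ 0 : Fin (n+2)).succAbove) 0 0 = x := by
      simp [Mmat, Fin.succAbove]
    have ei : ∀ i : Fin n,
        (Mmat (n + 2) x).submatrix Fin.succ ((Fin.succ 0 : Fin (n+2)).succAbove) i.succ 0 = 0 := by
      intro i
      simp [Mmat, Fin.succAbove]
    rw [e0]
    rw [Finset.sum_eq_zero (fun i _ => by rw [ei]; ring)]
    norm_num [P]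
  rw [P, det_succ_row_zero, Fin.sum_univ_succ, Fin.sum_univ_succ, h1, hB]
  have e00 : Mmat (n+2) x 0 0 = 1 := by simp [Mmat]
  have e01 : Mmat (n+2) x 0 (Fin.succ 0) = x := by simp [Mmat]
  have e0j : ∀ i : Fin n, Mmat (n+2) x 0 i.succ.succ = 0 := by
    intro i; simp [Mmat]
  rw [e00, e01, Finset.sum_eq_zero (fun i _ => by rw [e0j]; ring), P]
  norm_num [P]
  ring

lemma P_zero (x : ℂ) : P 0 x = 1 := by simp [P]

lemma P_one (x : ℂ) : P 1 x = 1 := by simp [P, Matrix.det_fin_one, Mmat]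

lemma P_two (x : ℂ) : P 2 x = 1 - x ^ 2 := by
  have := P_rec 0 x
  rw [P_one, P_zero] at this
  simpa using this

lemma P_add (a b : ℕ) (x : ℂ) :
    P (a + b + 2) x = P (a + 1) x * P (b + 1) x - x ^ 2 * P a x * P b x := by
  induction b using Nat.twoStepInduction with
  | zero => rw [P_one, P_zero, P_rec]; ring
  | one =>
    have h3 : a + 1 + 2 = a + 1 + 2 := rfl
    rw [show a + 1 + 2 = (a + 1) + 2 from rfl, P_rec (a+1), P_rec a, P_two, P_one]; ring
  | more b ih1 ih2 =>
    have : a + (b + 2) + 2 = (a + b + 2) + 2 := by ring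
    rw [this, P_rec, ih1, show a + b + 2 + 1 = a + (b+1) + 2 by ring, ih2,
      show b + 2 + 1 = (b+1) + 2 from rfl, P_rec (b+1), P_rec b]
    ring

theorem P_odd_factor (n : ℕ) (hn : 1 < n) (x : ℂ) :
    P (2 * n - 1) x = P (n - 1) x * (P n x - x ^ 2 * P (n - 2) x) := by
  obtain ⟨m, rfl⟩ : ∃ m, n = m + 2 := ⟨n - 2, by omega⟩
  have h : 2 * (m + 2) - 1 = m + (m + 1) + 2 := by omega
  rw [h, P_add, show m + 2 - 1 = m + 1 from rfl, show m + 2 - 2 = m from rfl,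
    show m + 1 + 1 = m + 2 from rfl]
  ring
end

section
/- With P_n(x) = det(M_n(x)) as above, for all n > 1 the polynomials P_n(x), P_{n−1}(x) and P_{n−2}(x) are pairwise coprime in ℂ[x] (equivalently in ℚ[x]). -/
open Matrix Polynomial

noncomputable def MmatP (n : ℕ) : Matrix (Fin n) (Fin n) (Polynomial ℂ) :=
  Matrix.of fun i j =>
    if (i : ℕ) = (j : ℕ) then 1
    else if (i : ℕ) + 1 = (j : ℕ) ∨ (j : ℕ) + 1 = (i : ℕ) then Polynomial.X else 0

noncomputable def Ppoly (n : ℕ) : Polynomial ℂ := (MmatP n).det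
lemma ppoly_zero : Ppoly 0 = 1 := by simp [Ppoly, Matrix.det_fin_zero]

lemma ppoly_one : Ppoly 1 = 1 := by simp [Ppoly, Matrix.det_fin_one, MmatP]

lemma sub00 (n : ℕ) :
    (MmatP (n+2)).submatrix ((0 : Fin (n+2)).succAbove) Fin.succ = MmatP (n+1) := by
  apply Matrix.ext; intro i j
  simp only [Matrix.submatrix_apply, Fin.zero_succAbove, MmatP, Matrix.of_apply, Fin.val_succ]
  exact if_congr (by omega) rfl (if_congr (by omega) rfl rfl)

lemma sub11 (n : ℕ) :
    ((MmatP (n+2)).submatrix (Fin.succ 0 : Fin (n+2)).succAbove Fin.succ).submatrix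
      Fin.succ ((0 : Fin (n+1)).succAbove) = MmatP n := by
  apply Matrix.ext; intro i j
  have hr : (((Fin.succ 0 : Fin (n+2))).succAbove i.succ : ℕ) = (i : ℕ) + 2 := by
    rw [show (Fin.succ 0 : Fin (n+2)) = (0 : Fin (n+1)).succ from rfl,
      Fin.succ_succAbove_succ, Fin.zero_succAbove]
    simp
  have hc : ((Fin.succ ((0 : Fin (n+1)).succAbove j)) : ℕ) = (j : ℕ) + 2 := by
    rw [Fin.zero_succAbove]; simp
  simp only [Matrix.submatrix_apply, MmatP, Matrix.of_apply, hr, hc]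
  exact if_congr (by omega) rfl (if_congr (by omega) rfl rfl)

lemma ppoly_rec (n : ℕ) : Ppoly (n+2) = Ppoly (n+1) - X^2 * Ppoly n := by
  have h := Matrix.det_succ_column_zero (MmatP (n+2))
  rw [Fin.sum_univ_succ, Fin.sum_univ_succ] at h
  have hz : ∀ i : Fin n, MmatP (n+2) i.succ.succ 0 = 0 := by
    intro i
    simp only [MmatP, Matrix.of_apply, Fin.val_succ, Fin.val_zero]
    split_ifs <;> simp_all <;> omega
  simp only [hz, zero_mul, mul_zero, Finset.sum_const_zero, add_zero] at h
  have hA0 : MmatP (n+2) 0 0 = 1 := by simp [MmatP]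
  have hv1 : ((Fin.succ 0 : Fin (n+2)) : ℕ) = 1 := rfl
  have hv0 : ((0 : Fin (n+2)) : ℕ) = 0 := rfl
  have hA1 : MmatP (n+2) (Fin.succ 0) 0 = X := by
    simp only [MmatP, Matrix.of_apply, hv1, hv0]
    rw [if_neg (by omega), if_pos (by simp)]
  have h2 := Matrix.det_succ_row_zero
    ((MmatP (n+2)).submatrix ((Fin.succ 0 : Fin (n+2)).succAbove) Fin.succ)
  rw [Fin.sum_univ_succ] at h2
  have hz2 : ∀ j : Fin n,
      (MmatP (n+2)).submatrix ((Fin.succ 0 : Fin (n+2)).succAbove) Fin.succ 0 j.succ = 0 := by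
    intro j
    have h0 : ((Fin.succ 0 : Fin (n+2)).succAbove 0) = 0 := rfl
    simp only [Matrix.submatrix_apply, h0, MmatP, Matrix.of_apply, Fin.val_succ, Fin.val_zero]
    clear h h2 hz hA0 hA1
    split_ifs <;> simp_all <;> omega
  simp only [hz2, zero_mul, mul_zero, Finset.sum_const_zero, add_zero] at h2
  have hB0 : (MmatP (n+2)).submatrix ((Fin.succ 0 : Fin (n+2)).succAbove) Fin.succ 0 0 = X := by
    have h0 : ((Fin.succ 0 : Fin (n+2)).succAbove 0) = 0 := rfl
    have hc0 : ((Fin.succ (0 : Fin (n+1)) : Fin (n+2)) : ℕ) = 1 := rfl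
    simp only [Matrix.submatrix_apply, h0, MmatP, Matrix.of_apply, hc0, hv0]
    rw [if_neg (by omega), if_pos (by simp)]
  rw [sub11 n] at h2
  rw [hA0, hA1, h2, hB0] at h
  rw [show (0 : Fin (n+2)).succAbove = Fin.succAbove 0 from rfl, sub00 n] at h
  show (MmatP (n+2)).det = Ppoly (n+1) - X^2 * Ppoly n
  rw [h]
  simp only [Ppoly, Fin.val_zero, Fin.val_succ, pow_zero, pow_one]
  ring

lemma ppoly_aux : ∀ n : ℕ, IsCoprime (X : Polynomial ℂ) (Ppoly n) ∧
    IsCoprime (X : Polynomial ℂ) (Ppoly (n+1)) ∧ IsCoprime (Ppoly (n+1)) (Ppoly n) := by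
  intro n
  induction n with
  | zero =>
      rw [ppoly_zero, ppoly_one]
      exact ⟨isCoprime_one_right, isCoprime_one_right, isCoprime_one_right⟩
  | succ n ih =>
      obtain ⟨h0, h1, h2⟩ := ih
      have hX2 : IsCoprime (X : Polynomial ℂ) (Ppoly (n+2)) := by
        rw [ppoly_rec]
        have := h1.add_mul_left_right (-(X * Ppoly n))
        rwa [show Ppoly (n+1) + X * -(X * Ppoly n) = Ppoly (n+1) - X^2 * Ppoly n by ring]
          at this
      refine ⟨h1, hX2, ?_⟩
      rw [ppoly_rec]
      have hxp : IsCoprime ((X : Polynomial ℂ)^2 * Ppoly n) (Ppoly (n+1)) :=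
        (h1.pow_left).mul_left h2.symm
      have := (hxp.neg_left).add_mul_left_left 1
      rwa [show -(X^2 * Ppoly n) + Ppoly (n+1) * 1 = Ppoly (n+1) - X^2 * Ppoly n by ring]
        at this

lemma ppoly_skip (n : ℕ) : IsCoprime (Ppoly (n+2)) (Ppoly n) := by
  have h2 := (ppoly_aux n).2.2
  have := h2.add_mul_right_left (-(X^2))
  rw [ppoly_rec]
  rwa [show Ppoly (n+1) + -(X^2) * Ppoly n = Ppoly (n+1) - X^2 * Ppoly n by ring] at this

theorem P_pairwise_coprime (n : ℕ) (hn : 1 < n) :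
    IsCoprime (Ppoly n) (Ppoly (n - 1)) ∧
    IsCoprime (Ppoly n) (Ppoly (n - 2)) ∧
    IsCoprime (Ppoly (n - 1)) (Ppoly (n - 2)) := by
  obtain ⟨m, rfl⟩ : ∃ m, n = m + 2 := ⟨n - 2, by omega⟩
  refine ⟨?_, ?_, ?_⟩
  · exact (ppoly_aux (m+1)).2.2
  · exact ppoly_skip m
  · exact (ppoly_aux m).2.2
end
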